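/- Let G be an r-uniform hypergraph on t vertices with m edges. If m > t^r · C(t−1, r) / (t−1)^r, then G is dense. -/

import Mathlib

/-
Let `B = C(t-1, r) / (t-1)^r`, the Lagrangian of the complete `r`-graph on `t - 1` vertices.
The uniform weighting gives `λ(G) ≥ m / t^r > B`, while by Maclaurin's inequality every weighting
that vanishes at a vertex of `G` has value at most `B`. Let `H` be a proper subgraph; by
compactness of the simplex it suffices to show that every legal weighting `x` of `H` has value
`< λ(G)`. If `x` vanishes at a vertex of `G`, its value is at most `B`. Otherwise `x` is positive
on all of `G`, so `H` has all vertices of `G` and misses an edge of `G`; that edge has positive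
weight under `x`, hence the value of `x` on `H` is smaller than its value on `G`, which is at most
`λ(G)`.
-/

structure RUnifHypergraph (r : ℕ) where
  verts : Finset ℕ
  edges : Finset (Finset ℕ)
  edge_sub : ∀ e ∈ edges, e ⊆ verts
  edge_card : ∀ e ∈ edges, e.card = r

namespace RUnifHypergraph

variable {r : ℕ}

/-- The polynomial value `λ(E, x) = Σ_{e ∈ E} Π_{i ∈ e} x_i`. -/
def polyValue (E : Finset (Finset ℕ)) (x : ℕ → ℝ) : ℝ :=
  ∑ e ∈ E, ∏ i ∈ e, x i

/-- A legal weighting: nonnegative, supported on the vertex set, summing to 1. -/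
def LegalWeighting (G : RUnifHypergraph r) (x : ℕ → ℝ) : Prop :=
  (∀ i, 0 ≤ x i) ∧ (∀ i ∉ G.verts, x i = 0) ∧ ∑ i ∈ G.verts, x i = 1

/-- The Lagrangian of a hypergraph. -/
noncomputable def lagrangian (G : RUnifHypergraph r) : ℝ :=
  sSup {l : ℝ | ∃ x, G.LegalWeighting x ∧ l = polyValue G.edges x}

/-- An optimum weighting attains the Lagrangian. -/
def IsOptimal (G : RUnifHypergraph r) (x : ℕ → ℝ) : Prop :=
  G.LegalWeighting x ∧ polyValue G.edges x = G.lagrangian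

def IsSubgraph (H G : RUnifHypergraph r) : Prop :=
  H.verts ⊆ G.verts ∧ H.edges ⊆ G.edges

def IsProperSubgraph (H G : RUnifHypergraph r) : Prop :=
  H.IsSubgraph G ∧ (H.verts ≠ G.verts ∨ H.edges ≠ G.edges)

/-- A hypergraph is dense if every proper subgraph has strictly smaller Lagrangian. -/
def Dense (G : RUnifHypergraph r) : Prop :=
  ∀ H : RUnifHypergraph r, H.IsProperSubgraph G → H.lagrangian < G.lagrangian

/-- The link `E_i` of a vertex `i`. -/
def link (G : RUnifHypergraph r) (i : ℕ) : Finset (Finset ℕ) :=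
  (G.edges.filter fun e => i ∈ e).image fun e => e.erase i

/-- The pair link `E_{ij}`. -/
def pairLink (G : RUnifHypergraph r) (i j : ℕ) : Finset (Finset ℕ) :=
  (G.edges.filter fun e => i ∈ e ∧ j ∈ e).image fun e => (e.erase i).erase j

/-- `E_{i \ j} = E_i ∩ E_j^c`. -/
def linkDiff (G : RUnifHypergraph r) (i j : ℕ) : Finset (Finset ℕ) :=
  (G.link i).filter fun A => j ∉ A ∧ insert j A ∉ G.edges

/-- `G` contains a clique of order `t`. -/
def HasClique (G : RUnifHypergraph r) (t : ℕ) : Prop :=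
  ∃ S ⊆ G.verts, S.card = t ∧ S.powersetCard r ⊆ G.edges

/-- `G` is left-compressed: replacing a vertex of an edge by a smaller vertex
not in the edge yields an edge. -/
def LeftCompressed (G : RUnifHypergraph r) : Prop :=
  ∀ e ∈ G.edges, ∀ i j : ℕ, i ∈ G.verts → i < j → j ∈ e → i ∉ e →
    insert i (e.erase j) ∈ G.edges

/-- The subgraph induced on a vertex set `S`. -/
def induce (G : RUnifHypergraph r) (S : Finset ℕ) : RUnifHypergraph r :=
  ⟨G.verts ∩ S, G.edges.filter fun e => e ⊆ S,
   fun e he => Finset.subset_inter (G.edge_sub e (Finset.mem_filter.mp he).1)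
     (Finset.mem_filter.mp he).2,
   fun e he => G.edge_card e (Finset.mem_filter.mp he).1⟩

end RUnifHypergraph

/-- The complete `r`-graph on vertex set `{1, …, t}`. -/
def completeHG (t r : ℕ) : RUnifHypergraph r :=
  ⟨Finset.Icc 1 t, (Finset.Icc 1 t).powersetCard r,
   fun _ he => (Finset.mem_powersetCard.mp he).1,
   fun _ he => (Finset.mem_powersetCard.mp he).2⟩

/-- `H₁ = [t-1]^{(3)} \ {(t-3)(t-2)(t-1)}`. -/
def H1 (t : ℕ) : RUnifHypergraph 3 :=
  ⟨Finset.Icc 1 (t-1), (completeHG (t-1) 3).edges.erase {t-3, t-2, t-1},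
   fun e he => (completeHG (t-1) 3).edge_sub e (Finset.mem_of_mem_erase he),
   fun e he => (completeHG (t-1) 3).edge_card e (Finset.mem_of_mem_erase he)⟩

open Finset

theorem pow_mul_sub_le_pow_succ {a c : ℝ} (ha : 0 ≤ a) (hc : 0 ≤ c) (k : ℕ) :
    a ^ k * ((k + 1) * c - k * a) ≤ c ^ (k + 1) := by
  rcases ha.eq_or_lt with rfl | ha
  · cases k <;> simp [hc]
  have h := one_add_mul_sub_le_pow (a := c / a) (by linarith [div_nonneg hc ha.le]) (k + 1)
  calc a ^ k * ((k + 1) * c - k * a)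
      = a ^ (k + 1) * (1 + ((k + 1 : ℕ) : ℝ) * (c / a - 1)) := by field_simp; push_cast; ring
    _ ≤ a ^ (k + 1) * (c / a) ^ (k + 1) := by gcongr
    _ = c ^ (k + 1) := by rw [← mul_pow, mul_div_cancel₀ _ ha.ne']

/-- The inductive step of Maclaurin's inequality; after clearing the binomial coefficients it is
Bernoulli's inequality. -/
theorem choose_mul_pow_add_mul_le {n k : ℕ} (hk : k ≤ n) {a y : ℝ} (ha : 0 ≤ a)
    (hy : 0 ≤ y) :
    n.choose (k + 1) * a ^ (k + 1) + y * (n.choose k * a ^ k) ≤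
      (n + 1).choose (k + 1) * ((n * a + y) / (n + 1)) ^ (k + 1) := by
  set c := (n * a + y) / (n + 1) with hc
  have hy' : y = (n + 1) * c - n * a := by rw [hc]; field_simp; ring
  have h₁ : (n.choose (k + 1) : ℝ) * (k + 1) = n.choose k * (n - k) := by
    rw [← Nat.cast_sub hk]; exact_mod_cast Nat.choose_succ_right_eq n k
  have h₂ : ((n + 1).choose (k + 1) : ℝ) * (k + 1) = (n + 1) * n.choose k := by
    exact_mod_cast (Nat.add_one_mul_choose_eq n k).symm
  have hbern := pow_mul_sub_le_pow_succ ha (by positivity : 0 ≤ c) k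
  refine le_of_mul_le_mul_right ?_ (by positivity : (0 : ℝ) < k + 1)
  calc (n.choose (k + 1) * a ^ (k + 1) + y * (n.choose k * a ^ k)) * (k + 1)
      = (n + 1) * n.choose k * (a ^ k * ((k + 1) * c - k * a)) := by
        rw [add_mul, mul_right_comm, h₁, hy']; ring
    _ ≤ (n + 1) * n.choose k * c ^ (k + 1) := by gcongr
    _ = (n + 1).choose (k + 1) * c ^ (k + 1) * (k + 1) := by
        rw [mul_right_comm _ (c ^ _), h₂]

theorem sum_prod_powersetCard_succ_insert {α : Type*} [DecidableEq α] {s : Finset α} {v : α}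
    (hv : v ∉ s) (y : α → ℝ) (k : ℕ) :
    ∑ e ∈ (insert v s).powersetCard (k + 1), ∏ i ∈ e, y i =
      ∑ e ∈ s.powersetCard (k + 1), ∏ i ∈ e, y i +
        y v * ∑ e ∈ s.powersetCard k, ∏ i ∈ e, y i := by
  have hvmem : ∀ e ∈ s.powersetCard k, v ∉ e := fun e he hve =>
    hv ((mem_powersetCard.1 he).1 hve)
  rw [powersetCard_succ_insert hv, sum_union, sum_image, mul_sum]
  · exact congrArg _ (sum_congr rfl fun e he => prod_insert (hvmem e he))
  · intro e₁ h₁ e₂ h₂ h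
    simpa [erase_insert (hvmem e₁ h₁), erase_insert (hvmem e₂ h₂)] using
      congrArg (erase · v) h
  · exact disjoint_left.2 fun e he he' => by
      obtain ⟨e', -, rfl⟩ := mem_image.1 he'
      exact hv ((mem_powersetCard.1 he).1 (mem_insert_self v e'))

/-- Maclaurin's inequality `e_r(y) ≤ C(n, r) (e_1(y) / n)^r`. -/
theorem sum_prod_powersetCard_le_choose_mul_pow {α : Type*} [DecidableEq α] (s : Finset α)
    {y : α → ℝ} (hy : ∀ i ∈ s, 0 ≤ y i) (r : ℕ) :
    ∑ e ∈ s.powersetCard r, ∏ i ∈ e, y i ≤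
      s.card.choose r * ((∑ i ∈ s, y i) / s.card) ^ r := by
  induction s using Finset.induction_on generalizing r with
  | empty =>
    cases r with
    | zero => simp
    | succ k => simp [powersetCard_eq_empty.2 (by simp : (∅ : Finset α).card < k + 1)]
  | insert v s hv ih =>
    have hyv : 0 ≤ y v := hy v (mem_insert_self v s)
    have hy' : ∀ i ∈ s, 0 ≤ y i := fun i hi => hy i (mem_insert_of_mem hi)
    have hA : 0 ≤ ∑ i ∈ s, y i := sum_nonneg hy'
    cases r with
    | zero => simp
    | succ k =>
      rcases lt_or_ge s.card k with hsk | hks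
      · rw [powersetCard_eq_empty.2 (by rw [card_insert_of_notMem hv]; omega), sum_empty]
        have hsum := sum_nonneg hy
        positivity
      have hnA : (s.card : ℝ) * ((∑ i ∈ s, y i) / s.card) = ∑ i ∈ s, y i := by
        rcases s.eq_empty_or_nonempty with rfl | hs
        · simp
        · exact mul_div_cancel₀ _ (by exact_mod_cast hs.card_pos.ne')
      rw [sum_prod_powersetCard_succ_insert hv, sum_insert hv, card_insert_of_notMem hv,
        add_comm (y v), ← hnA]
      push_cast
      calc _ ≤ s.card.choose (k + 1) * ((∑ i ∈ s, y i) / s.card) ^ (k + 1) +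
            y v * (s.card.choose k * ((∑ i ∈ s, y i) / s.card) ^ k) :=
            add_le_add (ih hy' _) (mul_le_mul_of_nonneg_left (ih hy' _) hyv)
        _ ≤ _ := choose_mul_pow_add_mul_le hks (by positivity) hyv

namespace RUnifHypergraph

variable {r : ℕ}

theorem continuous_polyValue (E : Finset (Finset ℕ)) : Continuous (polyValue E) := by
  unfold polyValue; fun_prop

theorem LegalWeighting.le_one {G : RUnifHypergraph r} {x : ℕ → ℝ} (hx : G.LegalWeighting x)
    (i : ℕ) : x i ≤ 1 := by
  by_cases hi : i ∈ G.verts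
  · exact hx.2.2 ▸ single_le_sum (fun j _ => hx.1 j) hi
  · simp [hx.2.1 i hi]

theorem LegalWeighting.mono {H G : RUnifHypergraph r} (hHG : H.verts ⊆ G.verts) {x : ℕ → ℝ}
    (hx : H.LegalWeighting x) : G.LegalWeighting x :=
  ⟨hx.1, fun i hi => hx.2.1 i fun hiH => hi (hHG hiH),
    (sum_subset hHG fun i _ hiH => hx.2.1 i hiH) ▸ hx.2.2⟩

theorem isCompact_setOf_legalWeighting (G : RUnifHypergraph r) :
    IsCompact {x | G.LegalWeighting x} := by
  refine (isCompact_univ_pi fun _ => isCompact_Icc (a := (0 : ℝ)) (b := 1)).of_isClosed_subset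
    ?_ fun x hx i _ => ⟨hx.1 i, hx.le_one i⟩
  simp only [LegalWeighting, Set.ofPred_and, Set.ofPred_forall]
  exact (isClosed_iInter fun i => isClosed_le continuous_const (continuous_apply i)).inter
    ((isClosed_iInter fun i => isClosed_iInter fun _ => isClosed_eq (continuous_apply i)
      continuous_const).inter
    (isClosed_eq (continuous_finsetSum _ fun i _ => continuous_apply i) continuous_const))

theorem bddAbove_lagrangian_set (G : RUnifHypergraph r) :
    BddAbove {l : ℝ | ∃ x, G.LegalWeighting x ∧ l = polyValue G.edges x} :=
  (G.isCompact_setOf_legalWeighting.bddAbove_image (continuous_polyValue _).continuousOn).mono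
    (by rintro _ ⟨x, hx, rfl⟩; exact ⟨x, hx, rfl⟩)

theorem le_lagrangian {G : RUnifHypergraph r} {x : ℕ → ℝ} (hx : G.LegalWeighting x) :
    polyValue G.edges x ≤ G.lagrangian :=
  le_csSup G.bddAbove_lagrangian_set ⟨x, hx, rfl⟩

theorem exists_isOptimal {G : RUnifHypergraph r} (h : ∃ x, G.LegalWeighting x) :
    ∃ x, G.IsOptimal x := by
  obtain ⟨x, hx, hmax⟩ := G.isCompact_setOf_legalWeighting.exists_isMaxOn h
    (continuous_polyValue _).continuousOn
  refine ⟨x, hx, (le_lagrangian hx).antisymm ?_⟩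
  exact csSup_le ⟨_, x, hx, rfl⟩ fun _ ⟨y, hy, hl⟩ => hl ▸ hmax hy

/-- `0 < L` covers hypergraphs without legal weightings, whose Lagrangian is `sSup ∅ = 0`. -/
theorem lagrangian_lt_of_forall_polyValue_lt {G : RUnifHypergraph r} {L : ℝ} (hL : 0 < L)
    (h : ∀ x, G.LegalWeighting x → polyValue G.edges x < L) : G.lagrangian < L := by
  by_cases hG : ∃ x, G.LegalWeighting x
  · obtain ⟨x, hx, hval⟩ := exists_isOptimal hG
    exact hval ▸ h x hx
  · simp only [not_exists] at hG
    have : {l : ℝ | ∃ x, G.LegalWeighting x ∧ l = polyValue G.edges x} = ∅ :=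
      Set.eq_empty_of_forall_notMem fun _ ⟨x, hx, _⟩ => hG x hx
    rwa [lagrangian, this, Real.sSup_empty]

theorem polyValue_le_choose_div_pow {E : Finset (Finset ℕ)} (hE : ∀ e ∈ E, e.card = r)
    {x : ℕ → ℝ} {S : Finset ℕ} (hx : ∀ i ∈ S, 0 ≤ x i) (hS : ∀ i ∉ S, x i = 0)
    (hsum : ∑ i ∈ S, x i = 1) : polyValue E x ≤ S.card.choose r / S.card ^ r := by
  have hsupp : ∀ e ∈ E, ∏ i ∈ e, x i ≠ 0 → e ⊆ S := fun e _ hne i hi => by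
    by_contra hiS
    exact hne (prod_eq_zero hi (hS i hiS))
  calc polyValue E x = ∑ e ∈ E.filter (· ⊆ S), ∏ i ∈ e, x i :=
        (sum_filter_of_ne hsupp).symm
    _ ≤ ∑ e ∈ S.powersetCard r, ∏ i ∈ e, x i := by
        refine sum_le_sum_of_subset_of_nonneg (fun e he => ?_) fun e he _ => ?_
        · obtain ⟨heE, heS⟩ := mem_filter.1 he
          exact mem_powersetCard.2 ⟨heS, hE e heE⟩
        · exact prod_nonneg fun i hi => hx i ((mem_powersetCard.1 he).1 hi)
    _ ≤ S.card.choose r * ((∑ i ∈ S, x i) / S.card) ^ r :=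
        sum_prod_powersetCard_le_choose_mul_pow S hx r
    _ = S.card.choose r / S.card ^ r := by rw [hsum, div_pow, one_pow, mul_one_div]

theorem LegalWeighting.polyValue_le_of_eq_zero {G : RUnifHypergraph r} {x : ℕ → ℝ}
    (hx : G.LegalWeighting x) {i : ℕ} (hi : i ∈ G.verts) (hxi : x i = 0)
    {E : Finset (Finset ℕ)} (hE : ∀ e ∈ E, e.card = r) :
    polyValue E x ≤ (G.verts.card - 1).choose r / ((G.verts.card : ℝ) - 1) ^ r := by
  have h := polyValue_le_choose_div_pow hE (S := G.verts.erase i) (fun j _ => hx.1 j)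
    (fun j hj => by
      rcases eq_or_ne j i with rfl | hji
      · exact hxi
      · exact hx.2.1 j fun hj' => hj (mem_erase.2 ⟨hji, hj'⟩))
    (by rw [sum_erase _ hxi, hx.2.2])
  rwa [card_erase_of_mem hi, Nat.cast_pred (card_pos.2 ⟨i, hi⟩)] at h

theorem card_edges_div_pow_le_lagrangian {G : RUnifHypergraph r} (hG : G.verts.Nonempty) :
    (G.edges.card : ℝ) / G.verts.card ^ r ≤ G.lagrangian := by
  set u : ℕ → ℝ := fun i => if i ∈ G.verts then (G.verts.card : ℝ)⁻¹ else 0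
  have hu : G.LegalWeighting u := by
    refine ⟨fun i => by positivity, fun i hi => if_neg hi, ?_⟩
    rw [sum_ite_mem, inter_self, sum_const, nsmul_eq_mul,
      mul_inv_cancel₀ (by exact_mod_cast hG.card_pos.ne')]
  have hval : polyValue G.edges u = G.edges.card / G.verts.card ^ r := by
    have hprod : ∀ e ∈ G.edges, ∏ i ∈ e, u i = ((G.verts.card : ℝ)⁻¹) ^ r := by
      intro e he
      rw [prod_congr rfl fun i hi => if_pos (G.edge_sub e he hi), prod_const,
        G.edge_card e he]
    rw [polyValue, sum_congr rfl hprod, sum_const, nsmul_eq_mul, inv_pow, div_eq_mul_inv]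
  exact hval ▸ le_lagrangian hu

theorem card_edges_le_choose (G : RUnifHypergraph r) : G.edges.card ≤ G.verts.card.choose r :=
  card_powersetCard r G.verts ▸ card_le_card fun e he =>
    mem_powersetCard.2 ⟨G.edge_sub e he, G.edge_card e he⟩

end RUnifHypergraph

open RUnifHypergraph

/-- If `G` has `t` vertices and `m > t^r · C(t-1,r) / (t-1)^r` edges,
then `G` is dense. -/
theorem dense_of_many_edges {r t m : ℕ} (G : RUnifHypergraph r)
    (hv : G.verts.card = t) (he : G.edges.card = m)
    (h : (t : ℝ) ^ r * ((t - 1).choose r : ℝ) / ((t : ℝ) - 1) ^ r < (m : ℝ)) :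
    G.Dense := by
  have ht : 0 < t := by
    refine Nat.pos_of_ne_zero fun ht => ?_
    have hm : (m : ℝ) ≤ (0 : ℕ).choose r := by
      exact_mod_cast ht ▸ hv ▸ he ▸ G.card_edges_le_choose
    subst ht
    cases r <;> simp at h hm <;> linarith
  have hG : G.verts.Nonempty := card_pos.1 (hv ▸ ht)
  set B : ℝ := ((t - 1).choose r : ℝ) / ((t : ℝ) - 1) ^ r
  have hB : 0 ≤ B :=
    div_nonneg (Nat.cast_nonneg _) (pow_nonneg (sub_nonneg.2 (Nat.one_le_cast.2 ht)) r)
  have hBG : B < G.lagrangian := by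
    refine lt_of_lt_of_le ?_ (hv ▸ he ▸ card_edges_div_pow_le_lagrangian hG)
    rwa [lt_div_iff₀' (by positivity), ← mul_div_assoc]
  rintro H ⟨⟨hV, hE⟩, hne⟩
  refine lagrangian_lt_of_forall_polyValue_lt (hB.trans_lt hBG) fun x hx => ?_
  have hxG := hx.mono hV
  by_cases hzero : ∃ i ∈ G.verts, x i = 0
  · obtain ⟨i, hi, hxi⟩ := hzero
    have hxB := hxG.polyValue_le_of_eq_zero hi hxi H.edge_card
    rw [hv] at hxB
    exact hxB.trans_lt hBG
  · simp only [not_exists, not_and] at hzero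
    have hEne : H.edges ≠ G.edges := hne.resolve_left fun hVne => by
      obtain ⟨i, hiG, hiH⟩ := exists_of_ssubset (hV.ssubset_of_ne hVne)
      exact hzero i hiG (hx.2.1 i hiH)
    obtain ⟨e, heG, heH⟩ := exists_of_ssubset (hE.ssubset_of_ne hEne)
    calc polyValue H.edges x < polyValue G.edges x :=
          sum_lt_sum_of_subset hE heG heH
            (prod_pos fun i hi => (hx.1 i).lt_of_ne' (hzero i (G.edge_sub e heG hi)))
            fun _ _ _ => prod_nonneg fun i _ => hx.1 i
      _ ≤ G.lagrangian := le_lagrangian hxG
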